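/- Fix V > 0 and c ∈ (0,1), and let K_ad be the set of indicator functions χ_ω of Lebesgue measurable sets ω ⊆ (0,1) such that the total variation of χ_ω on [0,1] is at most V and |ω| = c. Then K_ad is sequentially compact in L²(0,1): every sequence (χ_{ω_n}) in K_ad has a subsequence converging in the L²(0,1) norm to some χ_ω ∈ K_ad, i.e. with Var(χ_ω,[0,1]) ≤ V and |ω| = c. -/

import Mathlib

open MeasureTheory Set Filter

section Auxiliary

/-- Generic comparison lemma for variations. -/
lemma eVar_le_add {f g h : ℝ → ℝ} {s : Set ℝ}
    (H : ∀ x ∈ s, ∀ y ∈ s, edist (f x) (f y) ≤ edist (g x) (g y) + edist (h x) (h y)) :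
    eVariationOn f s ≤ eVariationOn g s + eVariationOn h s := by
  apply iSup_le
  rintro ⟨n, ⟨u, hu, us⟩⟩
  calc (∑ i ∈ Finset.range n, edist (f (u (i + 1))) (f (u i)))
      ≤ ∑ i ∈ Finset.range n, (edist (g (u (i+1))) (g (u i)) + edist (h (u (i+1))) (h (u i))) :=
        Finset.sum_le_sum fun i _ => H _ (us _) _ (us _)
    _ = (∑ i ∈ Finset.range n, edist (g (u (i+1))) (g (u i)))
        + ∑ i ∈ Finset.range n, edist (h (u (i+1))) (h (u i)) := Finset.sum_add_distrib
    _ ≤ _ := add_le_add (eVariationOn.sum_le (f := g) (n := n) hu us) (eVariationOn.sum_le (f := h) (n := n) hu us)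

/-- The variation of the indicator of an open interval on `[0,1]` is at most 2. -/
lemma eVar_Ioo (a b : ℝ) :
    eVariationOn (Set.indicator (Set.Ioo a b) fun _ => (1:ℝ)) (Set.Icc 0 1)
      ≤ ENNReal.ofReal 2 := by
  have key : eVariationOn (Set.indicator (Set.Ioo a b) fun _ => (1:ℝ)) (Set.Icc 0 1)
      ≤ eVariationOn (Set.indicator (Set.Ioi a) fun _ => (1:ℝ)) (Set.Icc 0 1)
        + eVariationOn (Set.indicator (Set.Ici b) fun _ => (1:ℝ)) (Set.Icc 0 1) := by
    apply eVar_le_add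
    intro x _ y _
    simp only [Set.indicator_apply, Set.mem_Ioo, Set.mem_Ioi, Set.mem_Ici]
    by_cases hx1 : a < x <;> by_cases hx2 : x < b <;> by_cases hy1 : a < y <;>
      by_cases hy2 : y < b <;>
      simp [hx1, hx2, hy1, hy2, not_lt.mp, edist_dist, Real.dist_eq, not_lt] <;>
      norm_num <;>
      first
        | exact zero_le _
        | exact le_self_add
        | exact le_add_self
        | (split_ifs <;> norm_num <;> linarith)
  refine key.trans ?_
  have h1 : eVariationOn (Set.indicator (Set.Ioi a) fun _ => (1:ℝ)) (Set.Icc 0 1)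
      ≤ ENNReal.ofReal 1 := by
    have hm : MonotoneOn (Set.indicator (Set.Ioi a) fun _ => (1:ℝ)) (Set.Icc 0 1) := by
      intro x _ y _ hxy
      simp only [Set.indicator_apply, Set.mem_Ioi]
      by_cases h : a < x
      · rw [if_pos h, if_pos (lt_of_lt_of_le h hxy)]
      · rw [if_neg h]; split_ifs <;> norm_num
    have := hm.eVariationOn_le (Set.left_mem_Icc.mpr zero_le_one)
      (Set.right_mem_Icc.mpr zero_le_one)
    rw [Set.inter_self] at this
    refine this.trans (ENNReal.ofReal_le_ofReal ?_)
    simp only [Set.indicator_apply, Set.mem_Ioi]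
    split_ifs <;> norm_num
  have h2 : eVariationOn (Set.indicator (Set.Ici b) fun _ => (1:ℝ)) (Set.Icc 0 1)
      ≤ ENNReal.ofReal 1 := by
    have hm : MonotoneOn (Set.indicator (Set.Ici b) fun _ => (1:ℝ)) (Set.Icc 0 1) := by
      intro x _ y _ hxy
      simp only [Set.indicator_apply, Set.mem_Ici]
      by_cases h : b ≤ x
      · rw [if_pos h, if_pos (le_trans h hxy)]
      · rw [if_neg h]; split_ifs <;> norm_num
    have := hm.eVariationOn_le (Set.left_mem_Icc.mpr zero_le_one)
      (Set.right_mem_Icc.mpr zero_le_one)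
    rw [Set.inter_self] at this
    refine this.trans (ENNReal.ofReal_le_ofReal ?_)
    simp only [Set.indicator_apply, Set.mem_Ici]
    split_ifs <;> norm_num
  calc _ ≤ ENNReal.ofReal 1 + ENNReal.ofReal 1 := add_le_add h1 h2
    _ = ENNReal.ofReal 2 := by rw [← ENNReal.ofReal_add] <;> norm_num

lemma eVar_union (A B : Set ℝ) (s : Set ℝ) :
    eVariationOn (Set.indicator (A ∪ B) fun _ => (1:ℝ)) s
      ≤ eVariationOn (Set.indicator A fun _ => (1:ℝ)) s
        + eVariationOn (Set.indicator B fun _ => (1:ℝ)) s := by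
  apply eVar_le_add
  intro x _ y _
  by_cases hx1 : x ∈ A <;> by_cases hx2 : x ∈ B <;> by_cases hy1 : y ∈ A <;>
    by_cases hy2 : y ∈ B <;>
    simp [Set.indicator_apply, hx1, hx2, hy1, hy2, edist_dist, Real.dist_eq] <;>
    first | exact zero_le _ | exact le_self_add | exact le_add_self

lemma eVar_empty (s : Set ℝ) :
    eVariationOn (Set.indicator (∅ : Set ℝ) fun _ => (1:ℝ)) s = 0 := by
  apply eVariationOn.constant_on
  rintro x ⟨a, _, rfl⟩ y ⟨b, _, rfl⟩
  simp

lemma eVar_iUnion {ι : Type*} (t : Finset ι) (S : ι → Set ℝ) (s : Set ℝ) :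
    eVariationOn (Set.indicator (⋃ i ∈ t, S i) fun _ => (1:ℝ)) s
      ≤ ∑ i ∈ t, eVariationOn (Set.indicator (S i) fun _ => (1:ℝ)) s := by
  classical
  induction t using Finset.induction_on with
  | empty => rw [show (⋃ i ∈ (∅:Finset ι), S i) = (∅ : Set ℝ) by simp, eVar_empty]; simp
  | insert _ _ ha ih =>
      rename_i a t
      rw [Finset.sum_insert ha, show (⋃ i ∈ insert a t, S i) = S a ∪ ⋃ i ∈ t, S i by simp]
      exact (eVar_union _ _ _).trans (add_le_add le_rfl ih)

end Auxiliary


lemma key_points (A : Set ℝ) (hA : A ⊆ Set.Ioo 0 1) (k : ℕ) (X : ℕ → ℝ)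
    (hXA : ∀ i, i ≤ k → X i ∈ A)
    (hsep : ∀ i, i < k → ∃ z, X i < z ∧ z < X (i+1) ∧ z ∉ A) :
    ((2*k+2 : ℕ) : ENNReal) ≤ eVariationOn (Set.indicator A (fun _ => (1:ℝ))) (Set.Icc 0 1) := by
  classical
  have hsep' : ∀ i, ∃ z, i < k → (X i < z ∧ z < X (i+1) ∧ z ∉ A) := by
    intro i
    by_cases h : i < k
    · obtain ⟨z, hz⟩ := hsep i h; exact ⟨z, fun _ => hz⟩
    · exact ⟨0, fun h' => absurd h' h⟩
  choose z hz using hsep'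
  set f := Set.indicator A (fun _ => (1:ℝ)) with hf
  set W : ℕ → ℝ := fun i => if i = 0 then 0 else if i ≤ k then z (i-1) else 1 with hW
  have hWnotA : ∀ i, i ≤ k + 1 → W i ∉ A := by
    intro i hi
    show (if i = 0 then (0:ℝ) else if i ≤ k then z (i-1) else 1) ∉ A
    by_cases h1 : i = 0
    · rw [if_pos h1]; intro h; exact absurd (hA h).1 (lt_irrefl 0)
    by_cases h2 : i ≤ k
    · rw [if_neg h1, if_pos h2]; exact (hz (i-1) (by omega)).2.2
    · rw [if_neg h1, if_neg h2]; intro h; exact absurd (hA h).2 (lt_irrefl 1)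
  have hfW : ∀ i, i ≤ k + 1 → f (W i) = 0 := fun i hi =>
    Set.indicator_of_notMem (hWnotA i hi) _
  have hfX : ∀ i, i ≤ k → f (X i) = 1 := fun i hi =>
    Set.indicator_of_mem (hXA i hi) _
  have hWX : ∀ i, i ≤ k → W i < X i := by
    intro i hi
    show (if i = 0 then (0:ℝ) else if i ≤ k then z (i-1) else 1) < X i
    by_cases h1 : i = 0
    · rw [if_pos h1]; subst h1; exact (hA (hXA 0 (by omega))).1
    · rw [if_neg h1, if_pos hi]
      have := (hz (i-1) (by omega)).2.1
      rwa [show i - 1 + 1 = i by omega] at this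
  have hXW : ∀ i, i ≤ k → X i < W (i+1) := by
    intro i hi
    show X i < if i + 1 = 0 then (0:ℝ) else if i + 1 ≤ k then z (i+1-1) else 1
    rw [if_neg (by omega)]
    by_cases h : i + 1 ≤ k
    · rw [if_pos h, show i + 1 - 1 = i by omega]
      exact (hz i (by omega)).1
    · rw [if_neg h]
      exact (hA (hXA i hi)).2
  have hXIcc : ∀ i, i ≤ k → X i ∈ Set.Icc (0:ℝ) 1 := by
    intro i hi
    have := hA (hXA i hi)
    exact ⟨this.1.le, this.2.le⟩
  have hWIcc : ∀ i, i ≤ k + 1 → W i ∈ Set.Icc (0:ℝ) 1 := by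
    intro i hi
    show (if i = 0 then (0:ℝ) else if i ≤ k then z (i-1) else 1) ∈ Set.Icc (0:ℝ) 1
    by_cases h1 : i = 0
    · rw [if_pos h1]; norm_num
    by_cases h2 : i ≤ k
    · rw [if_neg h1, if_pos h2]
      have hz1 := (hz (i-1) (by omega)).1
      have hz2 := (hz (i-1) (by omega)).2.1
      have hXl := (hXIcc (i-1) (by omega)).1
      have hXr := (hXIcc ((i-1)+1) (by omega)).2
      constructor <;> linarith
    · rw [if_neg h1, if_neg h2]; norm_num
  set u : ℕ → ℝ := fun j =>
    if j < 2*k+2 then (if j % 2 = 0 then W (j/2) else X (j/2)) else 1 with hu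
  have humono : Monotone u := by
    apply monotone_nat_of_le_succ
    intro j
    simp only [hu]
    by_cases h1 : j + 1 < 2*k+2
    · have h0 : j < 2*k+2 := by omega
      rw [if_pos h0, if_pos h1]
      rcases Nat.even_or_odd j with he | ho
      · obtain ⟨m, hm⟩ := he
        have e1 : j % 2 = 0 := by omega
        have e2 : (j+1) % 2 ≠ 0 := by omega
        rw [if_pos e1, if_neg e2, show (j+1)/2 = j/2 by omega]
        exact (hWX (j/2) (by omega)).le
      · obtain ⟨m, hm⟩ := ho
        have e1 : j % 2 ≠ 0 := by omega
        have e2 : (j+1) % 2 = 0 := by omega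
        rw [if_neg e1, if_pos e2, show (j+1)/2 = j/2 + 1 by omega]
        exact (hXW (j/2) (by omega)).le
    · by_cases h0 : j < 2*k+2
      · have hj : j = 2*k+1 := by omega
        rw [if_pos h0, if_neg h1]
        have e1 : j % 2 ≠ 0 := by omega
        rw [if_neg e1]
        exact (hXIcc (j/2) (by omega)).2
      · rw [if_neg h0, if_neg h1]
  have humem : ∀ j, u j ∈ Set.Icc (0:ℝ) 1 := by
    intro j
    simp only [hu]
    split_ifs with h1 h2
    · exact hWIcc (j/2) (by omega)
    · exact hXIcc (j/2) (by omega)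
    · norm_num
  have hterm : ∀ j ∈ Finset.range (2*k+2), edist (f (u (j+1))) (f (u j)) = 1 := by
    intro j hj
    rw [Finset.mem_range] at hj
    have hval : ∀ a b : ℝ, f a = 1 → f b = 0 → edist (f a) (f b) = 1 := by
      intro a b ha hb
      rw [ha, hb, edist_dist, Real.dist_eq]
      norm_num
    rcases Nat.even_or_odd j with he | ho
    · obtain ⟨m, hm⟩ := he
      have h1 : j + 1 < 2*k+2 := by omega
      have fj : f (u j) = 0 := by
        simp only [hu, if_pos hj, if_pos (show j % 2 = 0 by omega)]
        exact hfW (j/2) (by omega)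
      have fj1 : f (u (j+1)) = 1 := by
        simp only [hu, if_pos h1, if_neg (show (j+1) % 2 ≠ 0 by omega)]
        exact hfX ((j+1)/2) (by omega)
      rw [hval _ _ fj1 fj]
    · obtain ⟨m, hm⟩ := ho
      have fj : f (u j) = 1 := by
        simp only [hu, if_pos hj, if_neg (show j % 2 ≠ 0 by omega)]
        exact hfX (j/2) (by omega)
      have fj1 : f (u (j+1)) = 0 := by
        by_cases h1 : j + 1 < 2*k+2
        · simp only [hu, if_pos h1, if_pos (show (j+1) % 2 = 0 by omega)]
          exact hfW ((j+1)/2) (by omega)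
        · simp only [hu, if_neg h1]
          exact Set.indicator_of_notMem (fun h => absurd (hA h).2 (lt_irrefl 1)) _
      rw [edist_comm, hval _ _ fj fj1]
  have hsum : (∑ j ∈ Finset.range (2*k+2), edist (f (u (j+1))) (f (u j)))
      = ((2*k+2 : ℕ) : ENNReal) := by
    rw [Finset.sum_congr rfl hterm, Finset.sum_const, Finset.card_range]
    simp
  calc ((2*k+2 : ℕ) : ENNReal) = _ := hsum.symm
    _ ≤ _ := eVariationOn.sum_le (f := f) humono humem

def comp (A : Set ℝ) (x : ℝ) : Set ℝ := {y | Set.uIcc x y ⊆ A}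

lemma comp_self {A : Set ℝ} {x : ℝ} (hx : x ∈ A) : x ∈ comp A x := by
  simp [comp, Set.uIcc_self, Set.singleton_subset_iff, hx]

lemma comp_subset {A : Set ℝ} (x : ℝ) : comp A x ⊆ A := fun y hy =>
  hy (Set.right_mem_uIcc)

lemma comp_eq {A : Set ℝ} {x y : ℝ} (h : Set.uIcc x y ⊆ A) : comp A x = comp A y := by
  have key : ∀ u v : ℝ, Set.uIcc u v ⊆ A → comp A v ⊆ comp A u := by
    intro u v huv w hw
    exact fun t ht => (Set.uIcc_subset_uIcc_union_uIcc (b := v) ht).elim (fun h' => huv h')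
      (fun h' => hw h')
  exact le_antisymm (key y x (Set.uIcc_comm x y ▸ h)) (key x y h)

lemma comp_convex {A : Set ℝ} {x y₁ y₂ w : ℝ} (h1 : y₁ ∈ comp A x) (h2 : y₂ ∈ comp A x)
    (hw : w ∈ Set.uIcc y₁ y₂) : w ∈ comp A x := by
  intro t ht
  rcases Set.uIcc_subset_uIcc_union_uIcc (b := y₁) ht with h' | h'
  · exact h1 h'
  · have h'' : t ∈ Set.uIcc y₁ y₂ := Set.uIcc_subset_uIcc Set.left_mem_uIcc hw h'
    rcases Set.uIcc_subset_uIcc_union_uIcc (b := x) h'' with h3 | h3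
    · exact h1 (Set.uIcc_comm y₁ x ▸ h3)
    · exact h2 h3

-- from m+1 points in A with pairwise distinct components, variation ≥ 2m+2
lemma comp_card_bound (A : Set ℝ) (hA : A ⊆ Set.Ioo 0 1) (m : ℕ)
    (x : Fin (m+1) → ℝ) (hxA : ∀ i, x i ∈ A)
    (hdist : ∀ i j, i ≠ j → comp A (x i) ≠ comp A (x j)) :
    ((2*m+2 : ℕ) : ENNReal)
      ≤ eVariationOn (Set.indicator A (fun _ => (1:ℝ))) (Set.Icc 0 1) := by
  classical
  have hinj : Function.Injective x := by
    intro i j hij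
    by_contra h
    exact hdist i j h (by rw [hij])
  set s : Finset ℝ := Finset.image x Finset.univ with hs
  have hcard : s.card = m + 1 := by
    rw [hs, Finset.card_image_of_injective _ hinj, Finset.card_univ, Fintype.card_fin]
  set e := s.orderIsoOfFin hcard with he
  -- the sorted points
  set X : ℕ → ℝ := fun i => (e ⟨min i m, by omega⟩ : ℝ) with hX
  have hXs : ∀ i, X i ∈ s := fun i => (e _).2
  have hmemA : ∀ i, X i ∈ A := by
    intro i
    have := hXs i
    rw [hs, Finset.mem_image] at this
    obtain ⟨j, _, hj⟩ := this
    rw [← hj]; exact hxA j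
  have hnr : ∀ p q : ℝ, p ∈ s → q ∈ s → p ≠ q → ¬ Set.uIcc p q ⊆ A := by
    intro p q hp hq hpq hsub
    rw [hs, Finset.mem_image] at hp hq
    obtain ⟨i, _, rfl⟩ := hp
    obtain ⟨j, _, rfl⟩ := hq
    exact hdist i j (fun h => hpq (by rw [h])) (comp_eq hsub)
  have hXmono : ∀ i, i < m → X i < X (i+1) := by
    intro i hi
    rw [hX]
    have : (⟨min i m, by omega⟩ : Fin (m+1)) < ⟨min (i+1) m, by omega⟩ := by
      simp only [Fin.mk_lt_mk]; omega
    exact Subtype.coe_lt_coe.mpr (e.strictMono this)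
  have hsep : ∀ i, i < m → ∃ z, X i < z ∧ z < X (i+1) ∧ z ∉ A := by
    intro i hi
    have hne : X i ≠ X (i+1) := ne_of_lt (hXmono i hi)
    have := hnr _ _ (hXs i) (hXs (i+1)) hne
    rw [Set.not_subset] at this
    obtain ⟨z, hz1, hz2⟩ := this
    rw [Set.uIcc_of_le (hXmono i hi).le] at hz1
    refine ⟨z, ?_, ?_, hz2⟩
    · rcases lt_or_eq_of_le hz1.1 with h | h
      · exact h
      · exact absurd (h ▸ hmemA i) hz2
    · rcases lt_or_eq_of_le hz1.2 with h | h
      · exact h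
      · exact absurd (h ▸ hmemA (i+1)) hz2
  exact key_points A hA m X (fun i hi => hmemA i) hsep

lemma decomp (A : Set ℝ) (hA : A ⊆ Set.Ioo 0 1) (N : ℕ)
    (hno : ∀ x : Fin (N+1) → ℝ, (∀ i, x i ∈ A) → ∃ i j, i ≠ j ∧ comp A (x i) = comp A (x j)) :
    ∃ a b : Fin N → ℝ, (∀ i, a i ∈ Set.Icc (0:ℝ) 1) ∧ (∀ i, b i ∈ Set.Icc (0:ℝ) 1) ∧
      volume (symmDiff A (⋃ i, Set.Ioo (a i) (b i))) = 0 := by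
  classical
  set C : Set (Set ℝ) := (comp A) '' A with hC
  -- basic facts about elements of C
  have hCprops : ∀ c ∈ C, c.Nonempty ∧ c ⊆ A ∧ Set.Ioo (sInf c) (sSup c) ⊆ c ∧
      sInf c ∈ Set.Icc (0:ℝ) 1 ∧ sSup c ∈ Set.Icc (0:ℝ) 1 := by
    rintro c ⟨x₀, hx₀, rfl⟩
    have hne : (comp A x₀).Nonempty := ⟨x₀, comp_self hx₀⟩
    have hsub : comp A x₀ ⊆ A := comp_subset x₀
    have hbddB : BddBelow (comp A x₀) := ⟨0, fun y hy => (hA (hsub hy)).1.le⟩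
    have hbddA : BddAbove (comp A x₀) := ⟨1, fun y hy => (hA (hsub hy)).2.le⟩
    refine ⟨hne, hsub, ?_, ?_, ?_⟩
    · intro w hw
      obtain ⟨y₁, hy₁, hy₁w⟩ := exists_lt_of_csInf_lt hne hw.1
      obtain ⟨y₂, hy₂, hwy₂⟩ := exists_lt_of_lt_csSup hne hw.2
      exact comp_convex hy₁ hy₂ (by
        rw [Set.uIcc_of_le (le_of_lt (hy₁w.trans hwy₂))]
        exact ⟨hy₁w.le, hwy₂.le⟩)
    · exact ⟨le_csInf hne (fun y hy => (hA (hsub hy)).1.le),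
        (csInf_le hbddB (comp_self hx₀)).trans (hA hx₀).2.le⟩
    · exact ⟨(hA hx₀).1.le.trans (le_csSup hbddA (comp_self hx₀)),
        csSup_le hne (fun y hy => (hA (hsub hy)).2.le)⟩
  -- cardinality control
  have hcard : ∀ t : Finset (Set ℝ), ↑t ⊆ C → t.card ≠ N + 1 := by
    intro t ht hcardt
    have e := t.equivFin
    rw [hcardt] at e
    set g : Fin (N+1) → Set ℝ := fun i => (e.symm i : Set ℝ) with hg
    have hginj : Function.Injective g := by
      intro i j hij
      have := Subtype.ext hij
      simpa using e.symm.injective this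
    have hgC : ∀ i, g i ∈ C := fun i => ht (e.symm i).2
    have hrep : ∀ i, ∃ x, x ∈ A ∧ comp A x = g i := by
      intro i
      obtain ⟨x, hx, hcx⟩ := hgC i
      exact ⟨x, hx, hcx⟩
    choose x hxA hxc using hrep
    obtain ⟨i, j, hij, hcomp⟩ := hno x hxA
    exact hij (hginj (by rw [← hxc i, ← hxc j, hcomp]))
  have hCfin : C.Finite := by
    by_contra hinf
    obtain ⟨t, htC, htcard⟩ := Set.Infinite.exists_subset_card_eq hinf (N+1)
    exact hcard t htC htcard
  set F := hCfin.toFinset with hF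
  have hFn : F.card ≤ N := by
    by_contra h
    obtain ⟨t, htF, htcard⟩ := Finset.exists_subset_card_eq (s := F) (n := N+1) (by omega)
    exact hcard t (fun c hc => hCfin.mem_toFinset.mp (htF hc)) htcard
  set n := F.card with hn
  set eq := F.equivFin with heq
  set a : Fin N → ℝ := fun i => if h : (i : ℕ) < n then sInf ((eq.symm ⟨i, h⟩ : Set ℝ)) else 0
    with ha
  set b : Fin N → ℝ := fun i => if h : (i : ℕ) < n then sSup ((eq.symm ⟨i, h⟩ : Set ℝ)) else 0
    with hb
  have hmemC : ∀ (i : ℕ) (h : i < n), ((eq.symm ⟨i, h⟩ : Set ℝ)) ∈ C := fun i h =>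
    hCfin.mem_toFinset.mp (eq.symm ⟨i, h⟩).2
  refine ⟨a, b, ?_, ?_, ?_⟩
  · intro i
    simp only [ha]
    split_ifs with h
    · exact (hCprops _ (hmemC i h)).2.2.2.1
    · norm_num
  · intro i
    simp only [hb]
    split_ifs with h
    · exact (hCprops _ (hmemC i h)).2.2.2.2
    · norm_num
  · -- measure of symmetric difference is zero
    set U := ⋃ i, Set.Ioo (a i) (b i) with hU
    have hUA : U ⊆ A := by
      rw [hU]
      apply Set.iUnion_subset
      intro i
      simp only [ha, hb]
      split_ifs with h
      · exact (fun w hw => (hCprops _ (hmemC i h)).2.1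
          ((hCprops _ (hmemC i h)).2.2.1 hw))
      · simp
    set Z := (fun c => sInf c) '' C ∪ (fun c => sSup c) '' C with hZ
    have hZct : Z.Countable := by
      apply Set.Countable.union <;> exact Set.Countable.image hCfin.countable _
    have hAU : A \ U ⊆ Z := by
      intro w hw
      set c := comp A w with hc
      have hcC : c ∈ C := ⟨w, hw.1, rfl⟩
      have hcF : c ∈ F := hCfin.mem_toFinset.mpr hcC
      set idx := eq ⟨c, hcF⟩ with hidx
      have hlt : (idx : ℕ) < n := idx.2
      have hIoo : Set.Ioo (a ⟨idx, lt_of_lt_of_le hlt hFn⟩) (b ⟨idx, lt_of_lt_of_le hlt hFn⟩)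
          = Set.Ioo (sInf c) (sSup c) := by
        simp only [ha, hb]
        have h' : ((⟨idx, lt_of_lt_of_le hlt hFn⟩ : Fin N) : ℕ) < n := hlt
        rw [dif_pos h', dif_pos h']
        have : (⟨((⟨idx, lt_of_lt_of_le hlt hFn⟩ : Fin N) : ℕ), h'⟩ : Fin n) = idx := by
          apply Fin.ext; rfl
        rw [this, hidx, Equiv.symm_apply_apply]
      have hwIoo : w ∉ Set.Ioo (sInf c) (sSup c) := by
        intro hmem
        exact hw.2 (Set.mem_iUnion.mpr ⟨⟨idx, lt_of_lt_of_le hlt hFn⟩, hIoo ▸ hmem⟩)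
      have hwc : w ∈ c := comp_self hw.1
      have h1 : sInf c ≤ w := csInf_le ⟨0, fun y hy => (hA ((hCprops c hcC).2.1 hy)).1.le⟩ hwc
      have h2 : w ≤ sSup c := le_csSup ⟨1, fun y hy => (hA ((hCprops c hcC).2.1 hy)).2.le⟩ hwc
      rcases lt_or_eq_of_le h1 with h1' | h1'
      · rcases lt_or_eq_of_le h2 with h2' | h2'
        · exact absurd ⟨h1', h2'⟩ hwIoo
        · exact Or.inr ⟨c, hcC, h2'.symm ▸ rfl⟩
      · exact Or.inl ⟨c, hcC, h1'.symm ▸ rfl⟩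
    have hsd : symmDiff A U ⊆ Z := by
      rw [Set.symmDiff_def]
      apply Set.union_subset hAU
      intro w hw
      exact absurd (hUA hw.1) hw.2
    exact measure_mono_null hsd (Set.Countable.measure_zero hZct _)


lemma symmDiff_Ioo_vol (a b a' b' : ℝ) :
    volume (symmDiff (Set.Ioo a b) (Set.Ioo a' b'))
      ≤ ENNReal.ofReal (2*|a-a'| + 2*|b-b'|) := by
  have hside : ∀ p q p' q' : ℝ, Set.Ioo p q \ Set.Ioo p' q' ⊆ Set.Ioc p p' ∪ Set.Ico q' q := by
    intro p q p' q' x ⟨⟨h1, h2⟩, h3⟩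
    rw [Set.mem_Ioo, not_and_or, not_lt, not_lt] at h3
    rcases h3 with h | h
    · exact Or.inl ⟨h1, h⟩
    · exact Or.inr ⟨h, h2⟩
  rw [Set.symmDiff_def]
  calc volume (Set.Ioo a b \ Set.Ioo a' b' ∪ Set.Ioo a' b' \ Set.Ioo a b)
      ≤ volume (Set.Ioo a b \ Set.Ioo a' b') + volume (Set.Ioo a' b' \ Set.Ioo a b) :=
        measure_union_le _ _
    _ ≤ (volume (Set.Ioc a a') + volume (Set.Ico b' b))
        + (volume (Set.Ioc a' a) + volume (Set.Ico b b')) := by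
        gcongr
        · exact (measure_mono (hside a b a' b')).trans (measure_union_le _ _)
        · exact (measure_mono (hside a' b' a b)).trans (measure_union_le _ _)
    _ ≤ ENNReal.ofReal |a-a'| + ENNReal.ofReal |b-b'|
        + (ENNReal.ofReal |a-a'| + ENNReal.ofReal |b-b'|) := by
        gcongr
        · rw [Real.volume_Ioc]
          exact ENNReal.ofReal_le_ofReal (by rw [abs_sub_comm]; exact le_abs_self _)
        · rw [Real.volume_Ico]
          exact ENNReal.ofReal_le_ofReal (le_abs_self _)
        · rw [Real.volume_Ioc]
          exact ENNReal.ofReal_le_ofReal (le_abs_self _)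
        · rw [Real.volume_Ico]
          exact ENNReal.ofReal_le_ofReal (by rw [abs_sub_comm]; exact le_abs_self _)
    _ = ENNReal.ofReal (2*|a-a'| + 2*|b-b'|) := by
        rw [← ENNReal.ofReal_add (abs_nonneg _) (abs_nonneg _), ← ENNReal.ofReal_add (by positivity) (by positivity)]
        ring_nf
  
lemma symmDiff_iUnion_subset {ι : Type*} (A B : ι → Set ℝ) :
    symmDiff (⋃ i, A i) (⋃ i, B i) ⊆ ⋃ i, symmDiff (A i) (B i) := by
  rw [Set.symmDiff_def]
  apply Set.union_subset
  · rintro x ⟨hx1, hx2⟩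
    obtain ⟨i, hi⟩ := Set.mem_iUnion.mp hx1
    refine Set.mem_iUnion.mpr ⟨i, Or.inl ⟨hi, fun h => hx2 (Set.mem_iUnion.mpr ⟨i, h⟩)⟩⟩
  · rintro x ⟨hx1, hx2⟩
    obtain ⟨i, hi⟩ := Set.mem_iUnion.mp hx1
    refine Set.mem_iUnion.mpr ⟨i, Or.inr ⟨hi, fun h => hx2 (Set.mem_iUnion.mpr ⟨i, h⟩)⟩⟩

lemma sq_indicator (A B : Set ℝ) (x : ℝ) :
    (Set.indicator A (fun _ => (1:ℝ)) x - Set.indicator B (fun _ => (1:ℝ)) x)^2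
      = Set.indicator (symmDiff A B) (fun _ => (1:ℝ)) x := by
  rw [Set.symmDiff_def]
  by_cases hA : x ∈ A <;> by_cases hB : x ∈ B <;>
    simp [Set.indicator_apply, hA, hB]

lemma integral_sq_diff (A B : Set ℝ) (hA : MeasurableSet A) (hB : MeasurableSet B)
    (hA' : A ⊆ Set.Ioo 0 1) (hB' : B ⊆ Set.Ioo 0 1) :
    (∫ x in Set.Ioo (0:ℝ) 1,
      (Set.indicator A (fun _ => (1:ℝ)) x - Set.indicator B (fun _ => (1:ℝ)) x)^2)
    = (volume (symmDiff A B)).toReal := by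
  simp only [sq_indicator]
  rw [MeasureTheory.setIntegral_indicator (hA.symmDiff hB), setIntegral_const, smul_eq_mul,
    mul_one]
  congr 1
  rw [Set.inter_eq_self_of_subset_right]
  intro x hx
  rw [Set.symmDiff_def] at hx
  rcases hx with h | h
  · exact hA' h.1
  · exact hB' h.1
/-- Sequential compactness of the admissible actuator set `K_ad` in `L²(0,1)`:
every sequence of indicator functions `χ_{ωₙ}` with `Var(χ_{ωₙ},[0,1]) ≤ V` and
`|ωₙ| = c` has a subsequence converging in the `L²(0,1)` norm to an indicator
function `χ_ω` with `Var(χ_ω,[0,1]) ≤ V` and `|ω| = c`. -/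
theorem stmt_6 (V c : ℝ) (hV : 0 < V) (hc : c ∈ Set.Ioo (0:ℝ) 1)
    (ω : ℕ → Set ℝ) (hsub : ∀ n, ω n ⊆ Set.Ioo (0:ℝ) 1)
    (hmeas : ∀ n, MeasurableSet (ω n))
    (hvar : ∀ n, eVariationOn (Set.indicator (ω n) fun _ => (1:ℝ)) (Set.Icc (0:ℝ) 1)
      ≤ ENNReal.ofReal V)
    (hvol : ∀ n, volume (ω n) = ENNReal.ofReal c) :
    ∃ φ : ℕ → ℕ, StrictMono φ ∧ ∃ ω' : Set ℝ, ω' ⊆ Set.Ioo (0:ℝ) 1 ∧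
      MeasurableSet ω' ∧
      eVariationOn (Set.indicator ω' fun _ => (1:ℝ)) (Set.Icc (0:ℝ) 1)
        ≤ ENNReal.ofReal V ∧
      volume ω' = ENNReal.ofReal c ∧
      Tendsto (fun k => (∫ x in Set.Ioo (0:ℝ) 1,
          (Set.indicator (ω (φ k)) (fun _ => (1:ℝ)) x
            - Set.indicator ω' (fun _ => (1:ℝ)) x) ^ 2) ^ ((1:ℝ)/2))
        atTop (nhds 0) := by
  classical
  set N : ℕ := ⌊V / 2⌋₊ with hN
  have hNV : (N : ℝ) ≤ V / 2 := Nat.floor_le (by positivity)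
  -- decompose each ω n into at most N open intervals (up to measure zero)
  have hdec : ∀ n, ∃ a b : Fin N → ℝ, (∀ i, a i ∈ Set.Icc (0:ℝ) 1)
      ∧ (∀ i, b i ∈ Set.Icc (0:ℝ) 1)
      ∧ volume (symmDiff (ω n) (⋃ i, Set.Ioo (a i) (b i))) = 0 := by
    intro n
    apply decomp (ω n) (hsub n) N
    intro x hxA
    by_contra hcon
    push_neg at hcon
    have hb := comp_card_bound (ω n) (hsub n) N x hxA hcon
    have hle : ((2*N+2 : ℕ) : ENNReal) ≤ ENNReal.ofReal V := hb.trans (hvar n)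
    rw [← ENNReal.ofReal_natCast (2*N+2)] at hle
    have hle' : ((2*N+2 : ℕ) : ℝ) ≤ V := (ENNReal.ofReal_le_ofReal_iff hV.le).mp hle
    have : (N + 1 : ℕ) ≤ N := by
      rw [hN]
      apply Nat.le_floor
      push_cast at hle' ⊢
      linarith
    omega
  choose a b haIcc hbIcc hsd0 using hdec
  -- compactness of the parameter space
  set p : ℕ → (Fin N → ℝ × ℝ) := fun n i => (a n i, b n i) with hp
  have hpmem : ∀ n, p n ∈ Set.univ.pi
      (fun _ : Fin N => (Set.Icc (0:ℝ) 1 ×ˢ Set.Icc (0:ℝ) 1)) := by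
    intro n i _
    exact ⟨haIcc n i, hbIcc n i⟩
  obtain ⟨L, hL, φ, hφ, hconv⟩ :=
    (isCompact_univ_pi (fun _ : Fin N => (isCompact_Icc.prod isCompact_Icc))).tendsto_subseq
      hpmem
  set a' : Fin N → ℝ := fun i => (L i).1 with ha'
  set b' : Fin N → ℝ := fun i => (L i).2 with hb'
  have hLmem : ∀ i, (L i).1 ∈ Set.Icc (0:ℝ) 1 ∧ (L i).2 ∈ Set.Icc (0:ℝ) 1 := by
    intro i
    have := hL i (Set.mem_univ i)
    exact ⟨this.1, this.2⟩
  have hconva : ∀ i, Tendsto (fun k => a (φ k) i) atTop (nhds (a' i)) := by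
    intro i
    have h1 : Tendsto (fun k => (p ∘ φ) k i) atTop (nhds (L i)) := tendsto_pi_nhds.mp hconv i
    exact (continuous_fst.tendsto (L i)).comp h1
  have hconvb : ∀ i, Tendsto (fun k => b (φ k) i) atTop (nhds (b' i)) := by
    intro i
    have h1 : Tendsto (fun k => (p ∘ φ) k i) atTop (nhds (L i)) := tendsto_pi_nhds.mp hconv i
    exact (continuous_snd.tendsto (L i)).comp h1
  set ω' : Set ℝ := ⋃ i, Set.Ioo (a' i) (b' i) with hω'
  have hω'sub : ω' ⊆ Set.Ioo (0:ℝ) 1 := by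
    rw [hω']
    apply Set.iUnion_subset
    intro i x hx
    have h1 := (hLmem i).1.1
    have h2 := (hLmem i).2.2
    exact ⟨lt_of_le_of_lt h1 hx.1, lt_of_lt_of_le hx.2 h2⟩
  have hω'meas : MeasurableSet ω' := MeasurableSet.iUnion (fun i => measurableSet_Ioo)
  -- variation bound for ω'
  have hω'var : eVariationOn (Set.indicator ω' fun _ => (1:ℝ)) (Set.Icc (0:ℝ) 1)
      ≤ ENNReal.ofReal V := by
    have heq : ω' = ⋃ i ∈ (Finset.univ : Finset (Fin N)), Set.Ioo (a' i) (b' i) := by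
      simp [hω']
    rw [heq]
    calc eVariationOn (Set.indicator (⋃ i ∈ (Finset.univ : Finset (Fin N)),
            Set.Ioo (a' i) (b' i)) fun _ => (1:ℝ)) (Set.Icc (0:ℝ) 1)
        ≤ ∑ i ∈ (Finset.univ : Finset (Fin N)),
            eVariationOn (Set.indicator (Set.Ioo (a' i) (b' i)) fun _ => (1:ℝ))
              (Set.Icc (0:ℝ) 1) := eVar_iUnion _ _ _
      _ ≤ ∑ _i ∈ (Finset.univ : Finset (Fin N)), ENNReal.ofReal 2 :=
          Finset.sum_le_sum (fun i _ => eVar_Ioo (a' i) (b' i))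
      _ = (N : ℕ) • ENNReal.ofReal 2 := by
          rw [Finset.sum_const, Finset.card_univ, Fintype.card_fin]
      _ = ENNReal.ofReal ((N : ℝ) * 2) := by
          rw [nsmul_eq_mul, ← ENNReal.ofReal_natCast N,
            ← ENNReal.ofReal_mul (Nat.cast_nonneg N)]
      _ ≤ ENNReal.ofReal V := ENNReal.ofReal_le_ofReal (by linarith)
  -- measure of symmetric differences tends to zero
  set R : ℕ → ℝ := fun k => ∑ i : Fin N,
    (2*|a (φ k) i - a' i| + 2*|b (φ k) i - b' i|) with hR
  have hRnonneg : ∀ k, 0 ≤ R k := by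
    intro k
    apply Finset.sum_nonneg
    intro i _
    positivity
  have hR0 : Tendsto R atTop (nhds 0) := by
    have : Tendsto (fun k => ∑ i : Fin N,
        ((2:ℝ)*|a (φ k) i - a' i| + 2*|b (φ k) i - b' i|)) atTop
        (nhds (∑ _i : Fin N, ((2:ℝ)*0 + 2*0))) := by
      apply tendsto_finset_sum
      intro i _
      have h1 : Tendsto (fun k => |a (φ k) i - a' i|) atTop (nhds 0) := by
        have := tendsto_iff_dist_tendsto_zero.mp (hconva i)
        simpa [Real.dist_eq] using this
      have h2 : Tendsto (fun k => |b (φ k) i - b' i|) atTop (nhds 0) := by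
        have := tendsto_iff_dist_tendsto_zero.mp (hconvb i)
        simpa [Real.dist_eq] using this
      exact ((h1.const_mul 2).add (h2.const_mul 2))
    simpa using this
  have hDle : ∀ k, volume (symmDiff (ω (φ k)) ω') ≤ ENNReal.ofReal (R k) := by
    intro k
    set U : Set ℝ := ⋃ i, Set.Ioo (a (φ k) i) (b (φ k) i) with hU
    have tri : symmDiff (ω (φ k)) ω' ⊆ symmDiff (ω (φ k)) U ∪ symmDiff U ω' :=
      symmDiff_triangle _ _ _
    calc volume (symmDiff (ω (φ k)) ω')
        ≤ volume (symmDiff (ω (φ k)) U ∪ symmDiff U ω') := measure_mono tri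
      _ ≤ volume (symmDiff (ω (φ k)) U) + volume (symmDiff U ω') := measure_union_le _ _
      _ = volume (symmDiff U ω') := by rw [hsd0 (φ k), zero_add]
      _ ≤ ∑ i : Fin N, volume (symmDiff (Set.Ioo (a (φ k) i) (b (φ k) i))
            (Set.Ioo (a' i) (b' i))) := by
          refine (measure_mono (symmDiff_iUnion_subset _ _)).trans ?_
          rw [← tsum_fintype (L := SummationFilter.unconditional _)]
          exact measure_iUnion_le _
      _ ≤ ∑ i : Fin N, ENNReal.ofReal (2*|a (φ k) i - a' i| + 2*|b (φ k) i - b' i|) :=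
          Finset.sum_le_sum (fun i _ => symmDiff_Ioo_vol _ _ _ _)
      _ = ENNReal.ofReal (R k) := by
          rw [hR, ENNReal.ofReal_sum_of_nonneg]
          intro i _
          positivity
  set D : ℕ → ℝ := fun k => (volume (symmDiff (ω (φ k)) ω')).toReal with hD
  have hD0 : Tendsto D atTop (nhds 0) := by
    apply squeeze_zero (fun k => ENNReal.toReal_nonneg)
      (fun k => ENNReal.toReal_le_of_le_ofReal (hRnonneg k) (hDle k)) hR0
  -- finiteness facts
  have hIoo1 : volume (Set.Ioo (0:ℝ) 1) = 1 := by simp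
  have hω'fin : volume ω' ≠ ⊤ := by
    refine ne_top_of_le_ne_top ?_ (measure_mono hω'sub)
    rw [hIoo1]; exact ENNReal.one_ne_top
  have hωfin : ∀ m, volume (ω m) ≠ ⊤ := fun m => by
    rw [hvol m]; exact ENNReal.ofReal_ne_top
  have hΔfin : ∀ k, volume (symmDiff (ω (φ k)) ω') ≠ ⊤ := by
    intro k
    have hsubΔ : symmDiff (ω (φ k)) ω' ⊆ Set.Ioo (0:ℝ) 1 := by
      rw [Set.symmDiff_def]
      apply Set.union_subset
      · exact fun x hx => hsub (φ k) hx.1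
      · exact fun x hx => hω'sub hx.1
    exact ne_top_of_le_ne_top (by rw [hIoo1]; exact ENNReal.one_ne_top) (measure_mono hsubΔ)
  -- volume of ω'
  have hω'vol : volume ω' = ENNReal.ofReal c := by
    have hcc : ∀ k, |(volume ω').toReal - c| ≤ D k := by
      intro k
      have hc1 : (volume (ω (φ k))).toReal = c := by
        rw [hvol (φ k), ENNReal.toReal_ofReal hc.1.le]
      have s1 : ω' ⊆ ω (φ k) ∪ symmDiff (ω (φ k)) ω' := by
        intro x hx
        by_cases h : x ∈ ω (φ k)
        · exact Or.inl h
        · refine Or.inr ?_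
          rw [Set.symmDiff_def]
          exact Or.inr ⟨hx, h⟩
      have s2 : ω (φ k) ⊆ ω' ∪ symmDiff (ω (φ k)) ω' := by
        intro x hx
        by_cases h : x ∈ ω'
        · exact Or.inl h
        · refine Or.inr ?_
          rw [Set.symmDiff_def]
          exact Or.inl ⟨hx, h⟩
      have e1 : volume ω' ≤ volume (ω (φ k)) + volume (symmDiff (ω (φ k)) ω') :=
        (measure_mono s1).trans (measure_union_le _ _)
      have e2 : volume (ω (φ k)) ≤ volume ω' + volume (symmDiff (ω (φ k)) ω') :=
        (measure_mono s2).trans (measure_union_le _ _)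
      have t1 : (volume ω').toReal ≤ c + D k := by
        have := ENNReal.toReal_mono (by
          exact ENNReal.add_ne_top.mpr ⟨hωfin _, hΔfin k⟩) e1
        rwa [ENNReal.toReal_add (hωfin _) (hΔfin k), hc1] at this
      have t2 : c ≤ (volume ω').toReal + D k := by
        have := ENNReal.toReal_mono (by
          exact ENNReal.add_ne_top.mpr ⟨hω'fin, hΔfin k⟩) e2
        rwa [ENNReal.toReal_add hω'fin (hΔfin k), hc1] at this
      rw [abs_le]
      constructor <;> linarith
    have habs : |(volume ω').toReal - c| ≤ 0 :=
      ge_of_tendsto' hD0 (fun k => hcc k)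
    have : (volume ω').toReal = c := by
      have := abs_nonneg ((volume ω').toReal - c)
      have h0 : |(volume ω').toReal - c| = 0 := le_antisymm habs this
      have := abs_eq_zero.mp h0
      linarith
    rw [← ENNReal.ofReal_toReal hω'fin, this]
  refine ⟨φ, hφ, ω', hω'sub, hω'meas, hω'var, hω'vol, ?_⟩
  -- L² convergence
  have hint : ∀ k, (∫ x in Set.Ioo (0:ℝ) 1,
      (Set.indicator (ω (φ k)) (fun _ => (1:ℝ)) x
        - Set.indicator ω' (fun _ => (1:ℝ)) x) ^ 2) = D k := fun k =>
    integral_sq_diff _ _ (hmeas _) hω'meas (hsub _) hω'sub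
  have hsqrt : Tendsto (fun k => Real.sqrt (D k)) atTop (nhds 0) := by
    have h := (Real.continuous_sqrt.tendsto 0).comp hD0
    simpa [Function.comp_def] using h
  apply hsqrt.congr
  intro k
  rw [hint k, ← Real.sqrt_eq_rpow]
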